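/- For all real numbers τ with 1 ≤ τ ≤ 2, ε with 0 < ε < 1, and ζ > 0, setting δ = (√(3−2ε)−1)/2, μ₁ = min{1,ζ}/4, μ₂ = min{δ,ζ}/4, R = (ε+√(3−2ε))/2 + ζ, the quantity (2R − δ − ε − 1 − τ·μ₁μ₂ − (1+2τ+R)μ₁)·(δ(1−μ₂) − 2μ₂) − (1−μ₂)(1−R) − μ₂τ is strictly positive. -/

import Mathlib

/-!
With `√(3 - 2ε) = 1 + 2δ` one has `ε = 1 - 2δ - 2δ²` and `R = 1 - δ² + ζ`, so the first factor is
`δ + 2ζ` minus `μ₁`-terms and `1 - R = δ² - ζ`. The expression is decreasing in `τ`, so `τ = 2` is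
the worst case. The bounds `μ₁ ≤ 1/4` and `μ₁ ≤ ζ/4` make the first factor at least `δ + ζ / 8`, and then
the expression is at least `ζ (1 + δ/8) - μ₂ (2 + 2δ + ζ (5/4 + δ/8))`, which `μ₂ ≤ min δ ζ / 4`
keeps positive as long as `δ ≤ 1/2`.
-/

theorem margin_pos {δ ζ τ ε R μ₁ μ₂ : ℝ} (hδ₀ : 0 < δ) (hδ₁ : δ ≤ 1 / 2) (hζ : 0 < ζ)
    (hτ : τ ≤ 2) (hε : ε = 1 - 2 * δ - 2 * δ ^ 2) (hR : R = 1 - δ ^ 2 + ζ)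
    (hμ₁ : 0 ≤ μ₁) (hμ₁_one : μ₁ ≤ 1 / 4) (hμ₁_ζ : μ₁ ≤ ζ / 4)
    (hμ₂ : 0 ≤ μ₂) (hμ₂_δ : μ₂ ≤ δ / 4) (hμ₂_ζ : μ₂ ≤ ζ / 4) :
    0 < (2 * R - δ - ε - 1 - τ * μ₁ * μ₂ - (1 + 2 * τ + R) * μ₁) *
          (δ * (1 - μ₂) - 2 * μ₂) - (1 - μ₂) * (1 - R) - μ₂ * τ := by
  subst hε hR
  have hB : 0 ≤ δ * (1 - μ₂) - 2 * μ₂ := by nlinarith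
  have hA : δ + ζ / 8 ≤ 2 * (1 - δ ^ 2 + ζ) - δ - (1 - 2 * δ - 2 * δ ^ 2) - 1 - τ * μ₁ * μ₂ -
      (1 + 2 * τ + (1 - δ ^ 2 + ζ)) * μ₁ := by
    nlinarith [mul_le_mul_of_nonneg_left hμ₁_ζ hζ.le, mul_nonneg hμ₁ hμ₂,
      mul_nonneg (mul_nonneg hμ₁ hμ₂) (by linarith : (0:ℝ) ≤ 2 - τ),
      mul_nonneg hμ₁ (by linarith : (0:ℝ) ≤ 2 - τ), mul_nonneg hμ₁ (sq_nonneg δ)]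
  calc (0 : ℝ) < ζ * (1 + δ / 8) - μ₂ * (2 + 2 * δ + ζ * (5 / 4 + δ / 8)) := by
        nlinarith [mul_le_mul_of_nonneg_left hμ₂_δ hζ.le, mul_nonneg hμ₂ hδ₀.le,
          mul_le_mul_of_nonneg_left hμ₂_ζ hδ₀.le,
          mul_le_mul_of_nonneg_left hμ₂_δ (mul_nonneg hζ.le hδ₀.le)]
    _ ≤ (δ + ζ / 8) * (δ * (1 - μ₂) - 2 * μ₂) - (1 - μ₂) * (1 - (1 - δ ^ 2 + ζ)) - μ₂ * τ := by
        nlinarith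
    _ ≤ _ := by gcongr

theorem eq_of_sqrt_three_sub_two_mul {ε : ℝ} (hε : ε ≤ 3 / 2) :
    ε = 1 - 2 * ((√(3 - 2 * ε) - 1) / 2) - 2 * ((√(3 - 2 * ε) - 1) / 2) ^ 2 := by
  have := Real.sq_sqrt (by linarith : (0:ℝ) ≤ 3 - 2 * ε)
  nlinarith

theorem stmt11_general (τ ε ζ : ℝ) (hτ2 : τ ≤ 2)
    (hε0 : 0 < ε) (hε1 : ε < 1) (hζ : 0 < ζ) :
    let δ : ℝ := (Real.sqrt (3 - 2 * ε) - 1) / 2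
    let μ₁ : ℝ := min 1 ζ / 4
    let μ₂ : ℝ := min δ ζ / 4
    let R : ℝ := (ε + Real.sqrt (3 - 2 * ε)) / 2 + ζ
    0 < (2 * R - δ - ε - 1 - τ * μ₁ * μ₂ - (1 + 2 * τ + R) * μ₁) *
          (δ * (1 - μ₂) - 2 * μ₂) - (1 - μ₂) * (1 - R) - μ₂ * τ := by
  intro δ μ₁ μ₂ R
  have hε : ε = 1 - 2 * δ - 2 * δ ^ 2 := eq_of_sqrt_three_sub_two_mul (by linarith)
  have hδ₀ : 0 < δ := by
    have : 1 < √(3 - 2 * ε) := by rw [Real.lt_sqrt zero_le_one]; linarith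
    simp only [δ]; linarith
  have hδ₁ : δ ≤ 1 / 2 := by
    have : √(3 - 2 * ε) ≤ 2 := by rw [Real.sqrt_le_left zero_le_two]; linarith
    simp only [δ]; linarith
  have hR : R = 1 - δ ^ 2 + ζ := by simp only [R, δ] at hε ⊢; linarith
  exact margin_pos hδ₀ hδ₁ hζ hτ2 hε hR (by positivity)
    (div_le_div_of_nonneg_right (min_le_left _ _) zero_le_four)
    (div_le_div_of_nonneg_right (min_le_right _ _) zero_le_four) (by positivity)
    (div_le_div_of_nonneg_right (min_le_left _ _) zero_le_four)
    (div_le_div_of_nonneg_right (min_le_right _ _) zero_le_four)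

theorem stmt11 (τ ε ζ : ℝ) (hτ1 : 1 ≤ τ) (hτ2 : τ ≤ 2)
    (hε0 : 0 < ε) (hε1 : ε < 1) (hζ : 0 < ζ) :
    let δ : ℝ := (Real.sqrt (3 - 2 * ε) - 1) / 2
    let μ₁ : ℝ := min 1 ζ / 4
    let μ₂ : ℝ := min δ ζ / 4
    let R : ℝ := (ε + Real.sqrt (3 - 2 * ε)) / 2 + ζ
    0 < (2 * R - δ - ε - 1 - τ * μ₁ * μ₂ - (1 + 2 * τ + R) * μ₁) *
          (δ * (1 - μ₂) - 2 * μ₂) - (1 - μ₂) * (1 - R) - μ₂ * τ :=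
  stmt11_general τ ε ζ hτ2 hε0 hε1 hζ
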